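/- arXiv:q-alg/9711007 — 9 statements merged into one kernel-verified Lean document; each statement's English description precedes it below -/
import Mathlib

section
/- Let R be a commutative ring, n a natural number, and A an n×n matrix over R. Then there exists a unique polynomial ∇ in the polynomial ring R[z] such that, in the Laurent polynomial ring R[s,s⁻¹], the evaluation of ∇ at s − s⁻¹ equals det(s·A − s⁻¹·Aᵀ) (the determinant of the matrix whose (i,j) entry is s·A_{ij} − s⁻¹·A_{ji}). Moreover the constant term of ∇ satisfies ∇(0) = det(A − Aᵀ). (This justifies the definition of the Conway polynomial ∇_L(z) from a Seifert matrix A via ∇_L(t−t⁻¹) = det(tA − t⁻¹Aᵀ).) -/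
open LaurentPolynomial Polynomial Matrix

/-- The Laurent polynomial matrix `s•A - s⁻¹•Aᵀ` built from a Seifert matrix `A`. -/
noncomputable def seifertLaurentMatrix {R : Type*} [CommRing R] {n : ℕ}
    (A : Matrix (Fin n) (Fin n) R) : Matrix (Fin n) (Fin n) (LaurentPolynomial R) :=
  Matrix.of fun i j =>
    T 1 * algebraMap R (LaurentPolynomial R) (A i j)
      - T (-1) * algebraMap R (LaurentPolynomial R) (A j i)

namespace SeifertAux

variable {R : Type*} [CommRing R]

lemma neg_one_pow_natAbs (k : ℤ) :
    ((-1 : R) ^ k.natAbs) = if Even k then 1 else -1 := by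
  by_cases h : Even k
  · rw [if_pos h, Even.neg_one_pow (Int.natAbs_even.mpr h)]
  · rw [if_neg h, Odd.neg_one_pow]
    rw [Int.natAbs_odd]; exact Int.not_even_iff_odd.mp h

lemma neg_one_pow_natAbs_add (m n : ℤ) :
    ((-1 : R) ^ (m + n).natAbs) = (-1) ^ m.natAbs * (-1) ^ n.natAbs := by
  rw [neg_one_pow_natAbs, neg_one_pow_natAbs, neg_one_pow_natAbs]
  by_cases hm : Even m <;> by_cases hn : Even n <;>
    simp [Int.even_add, hm, hn]

lemma neg_one_pow_natAbs_neg (m : ℤ) :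
    ((-1 : R) ^ (-m).natAbs) = (-1) ^ m.natAbs := by
  rw [Int.natAbs_neg]

/-- The `R`-algebra involution of `R[T;T⁻¹]` sending `T ↦ -T⁻¹`. -/
noncomputable def sigmaHom : LaurentPolynomial R →ₐ[R] LaurentPolynomial R :=
  AddMonoidAlgebra.lift R _ ℤ
    { toFun := fun n =>
        LaurentPolynomial.C ((-1 : R) ^ (Multiplicative.toAdd n).natAbs) * T (-(Multiplicative.toAdd n))
      map_one' := by simp
      map_mul' := fun m n => by
        show LaurentPolynomial.C ((-1 : R) ^ (Multiplicative.toAdd m + Multiplicative.toAdd n).natAbs) *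
            T (-(Multiplicative.toAdd m + Multiplicative.toAdd n)) = _
        rw [neg_one_pow_natAbs_add, _root_.map_mul, neg_add, T_add]
        ring }

lemma sigmaHom_T (n : ℤ) :
    (sigmaHom (T n) : LaurentPolynomial R) = LaurentPolynomial.C ((-1 : R) ^ n.natAbs) * T (-n) := by
  have : (T n : LaurentPolynomial R) = AddMonoidAlgebra.ofCoeff (Finsupp.single n 1) := rfl
  rw [this]
  rw [show (AddMonoidAlgebra.ofCoeff (Finsupp.single n 1) : LaurentPolynomial R) = AddMonoidAlgebra.single n 1 from rfl]
  rw [sigmaHom, AddMonoidAlgebra.lift_single]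
  simp

end SeifertAux

namespace SeifertAux

variable {R : Type*} [CommRing R]

lemma algebraMap_eq_C (r : R) :
    algebraMap R (LaurentPolynomial R) r = LaurentPolynomial.C r := rfl

lemma mul_T_apply (f : LaurentPolynomial R) (n m : ℤ) :
    (f * T n : LaurentPolynomial R).coeff m = f.coeff (m - n) := by
  rw [show (T n : LaurentPolynomial R) = AddMonoidAlgebra.single n 1 from rfl,
    AddMonoidAlgebra.coeff_mul_single_apply, mul_one, ← sub_eq_add_neg]

lemma C_mul_apply (r : R) (f : LaurentPolynomial R) (m : ℤ) :
    (LaurentPolynomial.C r * f).coeff m = r * f.coeff m := by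
  rw [show (LaurentPolynomial.C r : LaurentPolynomial R) = AddMonoidAlgebra.single 0 r from rfl,
    AddMonoidAlgebra.coeff_single_mul_apply, neg_zero, zero_add]

lemma sigmaHom_apply (f : LaurentPolynomial R) (m : ℤ) :
    (sigmaHom f).coeff m = (-1) ^ m.natAbs * f.coeff (-m) := by
  induction f using AddMonoidAlgebra.induction_linear with
  | zero => simp
  | add f g hf hg =>
      rw [map_add, AddMonoidAlgebra.coeff_add, AddMonoidAlgebra.coeff_add, Finsupp.add_apply, Finsupp.add_apply, hf, hg]
      ring
  | single a b =>
      rw [single_eq_C_mul_T, _root_.map_mul, sigmaHom_T,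
        show (sigmaHom (LaurentPolynomial.C b) : LaurentPolynomial R)
          = LaurentPolynomial.C b from by
            rw [← algebraMap_eq_C]; exact sigmaHom.commutes b]
      rw [C_mul_apply, C_mul_apply, C_mul_apply, T_apply, T_apply]
      by_cases h : a = -m
      · rw [if_pos (by omega), if_pos h]
        subst h
        rw [Int.natAbs_neg]
        ring
      · rw [if_neg (by omega), if_neg h]
        ring

lemma sigmaHom_z : sigmaHom (T 1 - T (-1) : LaurentPolynomial R) = T 1 - T (-1) := by
  rw [map_sub, sigmaHom_T, sigmaHom_T]
  have : (LaurentPolynomial.C (-1 : R)) = -1 := by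
    simp
  simp only [pow_one, Int.natAbs_neg, Int.natAbs_one, neg_neg, this]
  ring

lemma zpow_succ_apply (k : ℕ) (m : ℤ) :
    ((T 1 - T (-1) : LaurentPolynomial R) ^ (k + 1)).coeff m
      = ((T 1 - T (-1) : LaurentPolynomial R) ^ k).coeff (m - 1)
        - ((T 1 - T (-1) : LaurentPolynomial R) ^ k).coeff (m + 1) := by
  rw [pow_succ, mul_sub, AddMonoidAlgebra.coeff_sub, Finsupp.sub_apply, mul_T_apply, mul_T_apply, sub_neg_eq_add]

lemma zpow_apply_out (k : ℕ) : ∀ m : ℤ, (k : ℤ) < m.natAbs →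
    ((T 1 - T (-1) : LaurentPolynomial R) ^ k).coeff m = 0 := by
  induction k with
  | zero =>
      intro m hm
      rw [pow_zero, ← T_zero, T_apply, if_neg (by omega)]
  | succ k ih =>
      intro m hm
      rw [zpow_succ_apply, ih (m - 1) (by omega), ih (m + 1) (by omega), sub_zero]

lemma zpow_apply_self (k : ℕ) :
    ((T 1 - T (-1) : LaurentPolynomial R) ^ k).coeff (k : ℤ) = 1 := by
  induction k with
  | zero => rw [pow_zero, ← T_zero, T_apply]; norm_num
  | succ k ih =>
      rw [zpow_succ_apply]
      have h1 : ((k : ℕ) + 1 : ℤ) - 1 = (k : ℤ) := by push_cast; ring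
      have h2 : ((T 1 - T (-1) : LaurentPolynomial R) ^ k).coeff (((k : ℕ) + 1 : ℤ) + 1) = 0 :=
        zpow_apply_out k _ (by omega)
      push_cast
      push_cast at ih h2
      rw [show (k : ℤ) + 1 - 1 = (k : ℤ) by ring, ih, h2, sub_zero]

lemma zpow_apply_neg_self (k : ℕ) :
    ((T 1 - T (-1) : LaurentPolynomial R) ^ k).coeff (-(k : ℤ)) = (-1) ^ k := by
  induction k with
  | zero => rw [pow_zero, pow_zero, ← T_zero, T_apply]; norm_num
  | succ k ih =>
      rw [zpow_succ_apply]
      have h2 : ((T 1 - T (-1) : LaurentPolynomial R) ^ k).coeff (-((k : ℕ) + 1 : ℤ) - 1) = 0 :=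
        zpow_apply_out k _ (by omega)
      push_cast
      push_cast at ih h2
      rw [h2, show -((k:ℤ) + 1) + 1 = -(k:ℤ) by ring, ih, pow_succ]
      ring

end SeifertAux

namespace SeifertAux

variable {R : Type*} [CommRing R]

lemma C_mul_zpow_apply (c : R) (k : ℕ) (m : ℤ) :
    (LaurentPolynomial.C c * (T 1 - T (-1) : LaurentPolynomial R) ^ k).coeff m
      = c * ((T 1 - T (-1) : LaurentPolynomial R) ^ k).coeff m :=
  C_mul_apply c _ m

lemma exists_poly (N : ℕ) : ∀ f : LaurentPolynomial R, sigmaHom f = f →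
    (∀ m : ℤ, (N : ℤ) < m.natAbs → f.coeff m = 0) →
    ∃ p : R[X], Polynomial.aeval (T 1 - T (-1) : LaurentPolynomial R) p = f := by
  induction N with
  | zero =>
      intro f _ hsupp
      refine ⟨Polynomial.C (f.coeff 0), ?_⟩
      rw [Polynomial.aeval_C, algebraMap_eq_C]
      ext m
      rw [show (LaurentPolynomial.C (f.coeff 0) : LaurentPolynomial R).coeff
          = Finsupp.single 0 (f.coeff 0) from rfl, Finsupp.single_apply]
      by_cases h : m = 0
      · subst h; simp
      · rw [if_neg (by omega), eq_comm]
        exact hsupp m (by omega)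
  | succ N ih =>
      intro f hσ hsupp
      have hsym : f.coeff (-((N : ℤ) + 1)) = (-1) ^ (N + 1) * f.coeff ((N : ℤ) + 1) := by
        conv_lhs => rw [← hσ]
        rw [sigmaHom_apply, neg_neg, show (-((N:ℤ)+1)).natAbs = N + 1 from by omega]
      have hgfix : sigmaHom (f - LaurentPolynomial.C (f.coeff ((N : ℤ) + 1))
          * (T 1 - T (-1)) ^ (N + 1)) = f - LaurentPolynomial.C (f.coeff ((N : ℤ) + 1))
          * (T 1 - T (-1)) ^ (N + 1) := by
        rw [map_sub, hσ, _root_.map_mul, map_pow, sigmaHom_z,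
          show (sigmaHom (LaurentPolynomial.C (f.coeff ((N : ℤ) + 1))) : LaurentPolynomial R)
            = LaurentPolynomial.C (f.coeff ((N : ℤ) + 1)) from by
              rw [← algebraMap_eq_C]; exact sigmaHom.commutes _]
      have hgsupp : ∀ m : ℤ, (N : ℤ) < m.natAbs →
          (f - LaurentPolynomial.C (f.coeff ((N : ℤ) + 1)) * (T 1 - T (-1)) ^ (N + 1)
            : LaurentPolynomial R).coeff m = 0 := by
        intro m hm
        rw [AddMonoidAlgebra.coeff_sub, Finsupp.sub_apply, C_mul_zpow_apply]
        rcases lt_trichotomy ((N : ℤ) + 1) m.natAbs with h | h | h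
        · rw [hsupp m (by omega), zpow_apply_out (N + 1) m (by omega), mul_zero, sub_zero]
        · rcases Int.natAbs_eq m with he | he
          · have hmm : m = (N : ℤ) + 1 := by omega
            subst hmm
            have hz := zpow_apply_self (R := R) (N + 1)
            push_cast at hz
            rw [hz, mul_one, sub_self]
          · have hmm : m = -((N : ℤ) + 1) := by omega
            subst hmm
            have hz := zpow_apply_neg_self (R := R) (N + 1)
            push_cast at hz
            rw [hz, hsym]
            ring
        · omega
      obtain ⟨p, hp⟩ := ih _ hgfix hgsupp
      refine ⟨p + Polynomial.C (f.coeff ((N : ℤ) + 1)) * Polynomial.X ^ (N + 1), ?_⟩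
      rw [map_add, _root_.map_mul, map_pow, Polynomial.aeval_X, Polynomial.aeval_C, hp,
        algebraMap_eq_C]
      ring

lemma aeval_z_injective :
    Function.Injective (Polynomial.aeval (T 1 - T (-1) : LaurentPolynomial R) : R[X] → LaurentPolynomial R) := by
  have key : ∀ p : R[X], Polynomial.aeval (T 1 - T (-1) : LaurentPolynomial R) p = 0 → p = 0 := by
    intro p hp
    by_contra hne
    set d := p.natDegree with hd
    have hsum := Polynomial.aeval_eq_sum_range
      (p := p) (T 1 - T (-1) : LaurentPolynomial R)
    rw [hp] at hsum
    have happ := congrArg (fun f : LaurentPolynomial R => f.coeff (d : ℤ)) hsum.symm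
    rw [show ((∑ i ∈ Finset.range (d + 1),
          p.coeff i • (T 1 - T (-1) : LaurentPolynomial R) ^ i).coeff (d : ℤ))
        = ∑ i ∈ Finset.range (d + 1),
            p.coeff i * ((T 1 - T (-1) : LaurentPolynomial R) ^ i).coeff (d : ℤ) from by
          rw [AddMonoidAlgebra.coeff_sum, Finsupp.finset_sum_apply]
          exact Finset.sum_congr rfl fun i _ => AddMonoidAlgebra.coeff_smul_apply _ _ _,
      Finset.sum_eq_single d
        (fun i hi hne => by
          have hid : i < d + 1 := Finset.mem_range.mp hi
          rw [zpow_apply_out i (d : ℤ) (by omega), mul_zero])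
        (fun h => absurd (Finset.self_mem_range_succ d) h),
      zpow_apply_self d, mul_one] at happ
    have : (0 : LaurentPolynomial R).coeff (d : ℤ) = 0 := rfl
    rw [this] at happ
    exact hne (Polynomial.leadingCoeff_eq_zero.mp (by rw [Polynomial.leadingCoeff, ← hd]; exact happ))
  intro p q h
  have := key (p - q) (by rw [map_sub, h, sub_self])
  exact sub_eq_zero.mp this

end SeifertAux

namespace SeifertAux

variable {R : Type*} [CommRing R]

lemma sigmaHom_T_one : sigmaHom (T 1 : LaurentPolynomial R) = -T (-1) := by
  rw [sigmaHom_T]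
  simp [neg_one_mul]

lemma sigmaHom_T_negone : sigmaHom (T (-1) : LaurentPolynomial R) = -T 1 := by
  rw [sigmaHom_T]
  simp [neg_one_mul]

/-- Evaluation of a Laurent polynomial at `1`. -/
noncomputable def epsHom : LaurentPolynomial R →ₐ[R] R := AddMonoidAlgebra.lift R R ℤ 1

lemma epsHom_T (n : ℤ) : epsHom (T n : LaurentPolynomial R) = 1 := by
  rw [show (T n : LaurentPolynomial R) = AddMonoidAlgebra.single n 1 from rfl, epsHom,
    AddMonoidAlgebra.lift_single]
  simp

end SeifertAux

open SeifertAux in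
/-- There is a unique polynomial `∇ ∈ R[z]` with `∇(s - s⁻¹) = det (s•A - s⁻¹•Aᵀ)`,
and it satisfies `∇(0) = det (A - Aᵀ)`. -/
theorem stmt_0 (R : Type*) [CommRing R] (n : ℕ) (A : Matrix (Fin n) (Fin n) R) :
    (∃! nabla : R[X],
        Polynomial.aeval (T 1 - T (-1) : LaurentPolynomial R) nabla =
          (seifertLaurentMatrix A).det) ∧
    (∀ nabla : R[X],
        Polynomial.aeval (T 1 - T (-1) : LaurentPolynomial R) nabla =
          (seifertLaurentMatrix A).det →
        nabla.coeff 0 = (A - Aᵀ).det) := by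
  classical
  have hmap : (seifertLaurentMatrix A).map (sigmaHom (R := R)) = (seifertLaurentMatrix A)ᵀ := by
    ext i j
    simp only [seifertLaurentMatrix, Matrix.map_apply, Matrix.of_apply, transpose_apply]
    rw [map_sub, _root_.map_mul, _root_.map_mul, sigmaHom_T_one, sigmaHom_T_negone,
      sigmaHom.commutes, sigmaHom.commutes]
    ring_nf
  have hfix : sigmaHom (seifertLaurentMatrix A).det = (seifertLaurentMatrix A).det := by
    rw [show sigmaHom (seifertLaurentMatrix A).det
        = ((seifertLaurentMatrix A).map (sigmaHom (R := R))).det from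
          RingHom.map_det sigmaHom.toRingHom _, hmap, det_transpose]
  have hbound : ∀ m : ℤ,
      (((seifertLaurentMatrix A).det.coeff.support.sup Int.natAbs : ℕ) : ℤ) < m.natAbs →
      (seifertLaurentMatrix A).det.coeff m = 0 := by
    intro m hm
    by_contra hne
    have hmem : m ∈ (seifertLaurentMatrix A).det.coeff.support := Finsupp.mem_support_iff.mpr hne
    have := Finset.le_sup (f := Int.natAbs) hmem
    omega
  obtain ⟨p, hp⟩ := exists_poly _ _ hfix hbound
  refine ⟨⟨p, hp, fun q hq => aeval_z_injective (hq.trans hp.symm)⟩, ?_⟩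
  intro nabla hnabla
  have heps : epsHom (Polynomial.aeval (T 1 - T (-1) : LaurentPolynomial R) nabla)
      = Polynomial.aeval (epsHom (T 1 - T (-1) : LaurentPolynomial R)) nabla :=
    (Polynomial.aeval_algHom_apply epsHom _ nabla).symm
  rw [hnabla, map_sub, epsHom_T, epsHom_T, sub_self] at heps
  have hz : Polynomial.aeval (0 : R) nabla = nabla.coeff 0 := by
    rw [Polynomial.coeff_zero_eq_eval_zero, ← Polynomial.coe_aeval_eq_eval]
  rw [hz] at heps
  rw [← heps]
  rw [show epsHom (seifertLaurentMatrix A).det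
      = ((seifertLaurentMatrix A).map (epsHom (R := R))).det from
        RingHom.map_det epsHom.toRingHom _]
  congr 1
  ext i j
  simp only [seifertLaurentMatrix, Matrix.map_apply, Matrix.of_apply, Matrix.sub_apply,
    transpose_apply]
  rw [map_sub, _root_.map_mul, _root_.map_mul, epsHom_T, epsHom_T,
    epsHom.commutes, epsHom.commutes, one_mul, one_mul]
  simp
end

section
/- Let R be a commutative ring and ι the ring automorphism of the Laurent polynomial ring R[s,s⁻¹] determined by s ↦ −s⁻¹. If f ∈ R[s,s⁻¹] satisfies ι(f) = f, then f lies in the image of the algebra homomorphism R[z] → R[s,s⁻¹] sending z to s − s⁻¹; that is, every Laurent polynomial fixed by ι is a polynomial in s − s⁻¹. -/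
open LaurentPolynomial Polynomial

section Aux

variable {R : Type*} [CommRing R]

private lemma aux_T_mul_inv : (T 1 : LaurentPolynomial R) * T (-1) = 1 := by
  rw [← T_add]; norm_num

private lemma aux_iota_Tneg (ι : LaurentPolynomial R ≃ₐ[R] LaurentPolynomial R)
    (hι : ι (T 1) = -T (-1)) : ι (T (-1)) = -T 1 := by
  have h1 : ι (T (-1)) * (-T (-1)) = 1 := by
    rw [← hι, ← map_mul, mul_comm, aux_T_mul_inv, map_one]
  have h2 : (-T (-1) : LaurentPolynomial R) * (-T 1) = 1 := by
    rw [neg_mul_neg, mul_comm, aux_T_mul_inv]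
  calc ι (T (-1)) = ι (T (-1)) * ((-T (-1)) * (-T 1)) := by rw [h2, mul_one]
    _ = (ι (T (-1)) * (-T (-1))) * (-T 1) := by ring
    _ = -T 1 := by rw [h1, one_mul]

private lemma aux_iota_T (ι : LaurentPolynomial R ≃ₐ[R] LaurentPolynomial R)
    (hι : ι (T 1) = -T (-1)) (n : ℤ) :
    ι (T n) = LaurentPolynomial.C ((-1 : R) ^ n.natAbs) * T (-n) := by
  induction n using Int.induction_on with
  | zero => simp
  | succ i ih =>
    rw [show ((i : ℤ) + 1).natAbs = (i : ℤ).natAbs + 1 from by omega]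
    rw [show (T ((i : ℤ) + 1) : LaurentPolynomial R) = T i * T 1 from T_add i 1,
      map_mul, ih, hι, pow_succ, map_mul, map_neg, map_one,
      show (-((i : ℤ) + 1)) = -(i : ℤ) + -1 from by ring, T_add]
    ring
  | pred i ih =>
    rw [show (-(i : ℤ) - 1).natAbs = (-(i : ℤ)).natAbs + 1 from by omega]
    rw [show (T (-(i : ℤ) - 1) : LaurentPolynomial R) = T (-i) * T (-1) from by
        rw [← T_add]; ring_nf,
      map_mul, ih, aux_iota_Tneg ι hι, pow_succ, map_mul, map_neg, map_one,
      show (-(-(i : ℤ) - 1)) = -(-(i : ℤ)) + 1 from by ring, T_add]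
    ring

private lemma aux_sub_apply (p q : LaurentPolynomial R) (k : ℤ) : (p - q).coeff k = p.coeff k - q.coeff k :=
  Finsupp.sub_apply p.coeff q.coeff k

private lemma aux_mul_T (h : LaurentPolynomial R) (x k : ℤ) :
    (h * T x : LaurentPolynomial R).coeff k = h.coeff (k - x) := by
  have := AddMonoidAlgebra.coeff_mul_single_apply h (1 : R) x k
  rw [mul_one] at this
  exact this

private lemma aux_C_mul (c : R) (h : LaurentPolynomial R) (k : ℤ) :
    (LaurentPolynomial.C c * h : LaurentPolynomial R).coeff k = c * h.coeff k :=
  AddMonoidAlgebra.coeff_single_zero_mul h c k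

private lemma aux_coeff (ι : LaurentPolynomial R ≃ₐ[R] LaurentPolynomial R)
    (hι : ι (T 1) = -T (-1)) (f : LaurentPolynomial R) (n : ℤ) :
    (ι f).coeff n = (-1 : R) ^ n.natAbs * f.coeff (-n) := by
  induction f using LaurentPolynomial.induction_on' with
  | add p q hp hq =>
    rw [map_add, show ((ι p + ι q : LaurentPolynomial R)).coeff n = (ι p).coeff n + (ι q).coeff n from
      Finsupp.add_apply _ _ _, hp, hq,
      show ((p + q : LaurentPolynomial R)).coeff (-n) = p.coeff (-n) + q.coeff (-n) from Finsupp.add_apply _ _ _]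
    ring
  | C_mul_T k a =>
    rw [map_mul, aux_iota_T ι hι, show ι (LaurentPolynomial.C a) = LaurentPolynomial.C a from by
      rw [LaurentPolynomial.C_eq_algebraMap]; exact ι.commutes a]
    rw [aux_C_mul, aux_C_mul, aux_C_mul, T_apply, T_apply]
    by_cases h : k = -n
    · subst h
      rw [if_pos (by omega), if_pos rfl, Int.natAbs_neg]
      ring
    · rw [if_neg (by omega), if_neg h]
      ring

private lemma aux_upow (m : ℕ) :
    (∀ k : ℤ, (m : ℤ) < k → ((T 1 - T (-1) : LaurentPolynomial R) ^ m).coeff k = 0) ∧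
    (∀ k : ℤ, k < -(m : ℤ) → ((T 1 - T (-1) : LaurentPolynomial R) ^ m).coeff k = 0) ∧
    ((T 1 - T (-1) : LaurentPolynomial R) ^ m).coeff m = 1 ∧
    ((T 1 - T (-1) : LaurentPolynomial R) ^ m).coeff (-m) = (-1 : R) ^ m := by
  set u : LaurentPolynomial R := T 1 - T (-1) with hu
  induction m with
  | zero =>
    have hone : ∀ k : ℤ, (u ^ 0 : LaurentPolynomial R).coeff k = if (0 : ℤ) = k then 1 else 0 := by
      intro k
      rw [pow_zero, ← single_zero_one_eq_one, AddMonoidAlgebra.coeff_single, Finsupp.single_apply]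
    refine ⟨fun k hk => ?_, fun k hk => ?_, ?_, ?_⟩ <;> rw [hone]
    · rw [if_neg (by omega)]
    · rw [if_neg (by omega)]
    · norm_num
    · norm_num
  | succ m ih =>
    obtain ⟨ih1, ih2, ih3, ih4⟩ := ih
    have key : ∀ k : ℤ, (u ^ (m + 1)).coeff k = (u ^ m).coeff (k - 1) - (u ^ m).coeff (k + 1) := by
      intro k
      have e1 : u ^ (m + 1) = u ^ m * T 1 - u ^ m * T (-1) := by
        rw [pow_succ, hu]; ring
      rw [e1, aux_sub_apply, aux_mul_T, aux_mul_T, sub_neg_eq_add]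
    refine ⟨fun k hk => ?_, fun k hk => ?_, ?_, ?_⟩
    · rw [key, ih1 _ (by omega), ih1 _ (by omega), sub_zero]
    · rw [key, ih2 _ (by omega), ih2 _ (by omega), sub_zero]
    · rw [key]
      push_cast
      rw [show ((m : ℤ) + 1 - 1) = (m : ℤ) from by ring, ih3, ih1 _ (by omega), sub_zero]
    · rw [key]
      push_cast
      rw [show (-((m : ℤ) + 1) + 1) = -(m : ℤ) from by ring, ih4,
        ih2 _ (by omega), zero_sub, pow_succ]
      ring

private lemma aux_main (ι : LaurentPolynomial R ≃ₐ[R] LaurentPolynomial R)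
    (hι : ι (T 1) = -T (-1)) (n : ℕ) :
    ∀ f : LaurentPolynomial R, ι f = f →
    (∀ k : ℤ, (n : ℤ) < k → f.coeff k = 0) → (∀ k : ℤ, k < -(n : ℤ) → f.coeff k = 0) →
    ∃ p : R[X], Polynomial.aeval (T 1 - T (-1) : LaurentPolynomial R) p = f := by
  set u : LaurentPolynomial R := T 1 - T (-1) with hu
  induction n with
  | zero =>
    intro f _ h1 h2
    refine ⟨Polynomial.C (f.coeff 0), ?_⟩
    rw [aeval_C, ← LaurentPolynomial.C_eq_algebraMap]
    ext k
    rw [LaurentPolynomial.C_apply]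
    rcases lt_trichotomy k 0 with h | h | h
    · rw [if_neg (by omega), h2 k (by omega)]
    · subst h; simp
    · rw [if_neg (by omega), h1 k (by omega)]
  | succ n ih =>
    intro f hf h1 h2
    set c : R := f.coeff (n + 1) with hc
    obtain ⟨u1, u2, u3, u4⟩ := aux_upow (R := R) (n + 1)
    rw [← hu] at u1 u2 u3 u4
    set g : LaurentPolynomial R := f - LaurentPolynomial.C c * u ^ (n + 1) with hg
    have hgc : ∀ k : ℤ, g.coeff k = f.coeff k - c * (u ^ (n + 1)).coeff k := by
      intro k
      rw [hg, aux_sub_apply, aux_C_mul]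
    have hgf : ι g = g := by
      rw [hg, map_sub, hf, map_mul, map_pow, LaurentPolynomial.C_eq_algebraMap, ι.commutes,
        ← LaurentPolynomial.C_eq_algebraMap, hu, map_sub, hι, aux_iota_Tneg ι hι]
      ring_nf
    have hfneg : f.coeff (-((n : ℤ) + 1)) = (-1 : R) ^ (n + 1) * c := by
      have h := aux_coeff ι hι f (-((n : ℤ) + 1))
      rw [hf] at h
      rw [h, show (-((n : ℤ) + 1)).natAbs = n + 1 from by omega, neg_neg, hc]
    have hg1 : ∀ k : ℤ, (n : ℤ) < k → g.coeff k = 0 := by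
      intro k hk
      rcases eq_or_lt_of_le (show (n : ℤ) + 1 ≤ k from by omega) with h | h
      · rw [hgc, ← h, show ((n : ℤ) + 1) = ((n + 1 : ℕ) : ℤ) from by push_cast; ring, u3,
          mul_one]
        rw [hc]
        push_cast
        ring_nf
      · rw [hgc, h1 k (by omega), u1 k (by push_cast; omega), mul_zero, sub_zero]
    have hg2 : ∀ k : ℤ, k < -(n : ℤ) → g.coeff k = 0 := by
      intro k hk
      rcases eq_or_lt_of_le (show k ≤ -((n : ℤ) + 1) from by omega) with h | h
      · rw [hgc, h, hfneg,
          show (-((n : ℤ) + 1)) = -((n + 1 : ℕ) : ℤ) from by push_cast; ring, u4]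
        ring
      · rw [hgc, h2 k (by omega), u2 k (by push_cast; omega), mul_zero, sub_zero]
    obtain ⟨p, hp⟩ := ih g hgf hg1 hg2
    refine ⟨p + Polynomial.C c * X ^ (n + 1), ?_⟩
    rw [map_add, hp, map_mul, map_pow, aeval_X, aeval_C,
      ← LaurentPolynomial.C_eq_algebraMap, hg]
    abel
end Aux

/-- Every Laurent polynomial fixed by the automorphism `ι : s ↦ -s⁻¹` of `R[s,s⁻¹]`
is a polynomial in `s - s⁻¹`. -/
theorem stmt_2 (R : Type*) [CommRing R]
    (ι : LaurentPolynomial R ≃ₐ[R] LaurentPolynomial R)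
    (hι : ι (T 1) = -T (-1))
    (f : LaurentPolynomial R) (hf : ι f = f) :
    ∃ p : R[X], Polynomial.aeval (T 1 - T (-1) : LaurentPolynomial R) p = f := by
  set n : ℕ := f.coeff.support.sup Int.natAbs with hn
  refine aux_main ι hι n f hf (fun k hk => ?_) (fun k hk => ?_) <;>
  · by_contra h
    have hmem : k ∈ f.coeff.support := Finsupp.mem_support_iff.mpr h
    have := Finset.le_sup (f := Int.natAbs) hmem
    omega
end

section
/- Let R be a commutative ring, t an invertible element of R (a unit), S an invertible n×n matrix over R, v an n×1 column matrix, w a 1×n row matrix, and c ∈ R. Let S̃ be the (n+2)×(n+2) matrix with block form [[S, v, 0], [w, c, −1], [0, t, 0]] (the last two rows are (w, c, −1) and (0,…,0, t, 0), and the last two columns are (v, c, t)ᵀ-style as displayed). Then S̃ is invertible, and for every k×n matrix B and k×1 column matrix b, setting B̃ to be the k×(n+2) matrix [B b 0] (B followed by the column b and then a zero column), one has B̃·S̃⁻¹·B̃ᵀ = B·S⁻¹·Bᵀ. (This is the computational content of the lemma that the matrix B·S_t⁻¹·Bᵀ built from a Seifert matrix of a string link is independent of the choice of Seifert surface: an elementary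 S-equivalence enlargement leaves it unchanged.) -/
open Matrix

/-- The elementary S-equivalence enlargement `S̃ = [[S, v, 0], [w, c, -1], [0, t, 0]]`
of a matrix `S`. -/
def enlargedS {R : Type*} [CommRing R] {n : ℕ}
    (S : Matrix (Fin n) (Fin n) R) (v : Matrix (Fin n) (Fin 1) R)
    (w : Matrix (Fin 1) (Fin n) R) (c t : R) :
    Matrix (Fin n ⊕ Fin 2) (Fin n ⊕ Fin 2) R :=
  Matrix.fromBlocks S
    (Matrix.of fun i j => if j = 0 then v i 0 else 0)
    (Matrix.of fun i j => if i = 0 then w 0 j else 0)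
    !![c, -1; t, 0]

/-- The enlargement `B̃ = [B b 0]` of a matrix `B` by a column `b` and a zero column. -/
def enlargedB {R : Type*} [CommRing R] {k n : ℕ}
    (B : Matrix (Fin k) (Fin n) R) (b : Matrix (Fin k) (Fin 1) R) :
    Matrix (Fin k) (Fin n ⊕ Fin 2) R :=
  Matrix.of fun i j => Sum.elim (B i) (fun j' => if j' = 0 then b i 0 else 0) j

/-- The enlarged matrix `S̃` is invertible and `B̃ S̃⁻¹ B̃ᵀ = B S⁻¹ Bᵀ`:
an elementary S-equivalence enlargement leaves `B S⁻¹ Bᵀ` unchanged. -/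
theorem stmt_3 (R : Type*) [CommRing R] (n : ℕ) (t : R) (ht : IsUnit t)
    (S : Matrix (Fin n) (Fin n) R) (hS : IsUnit S)
    (v : Matrix (Fin n) (Fin 1) R) (w : Matrix (Fin 1) (Fin n) R) (c : R) :
    IsUnit (enlargedS S v w c t) ∧
    ∀ (k : ℕ) (B : Matrix (Fin k) (Fin n) R) (b : Matrix (Fin k) (Fin 1) R),
      enlargedB B b * (enlargedS S v w c t)⁻¹ * (enlargedB B b)ᵀ = B * S⁻¹ * Bᵀ := by
  obtain ⟨u, hu⟩ := ht
  set s : R := ↑u⁻¹ with hs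
  have hst : s * t = 1 := by rw [hs, ← hu]; exact_mod_cast u.inv_mul
  have hts : t * s = 1 := by rw [hs, ← hu]; exact_mod_cast u.mul_inv
  set V : Matrix (Fin n) (Fin 2) R := Matrix.of fun i j => if j = 0 then v i 0 else 0 with hV
  set W : Matrix (Fin 2) (Fin n) R := Matrix.of fun i j => if i = 0 then w 0 j else 0 with hW
  set D : Matrix (Fin 2) (Fin 2) R := !![c, -1; t, 0] with hD
  letI : Invertible D := by
    refine ⟨!![0, s; -1, c * s], ?_, ?_⟩ <;>
    · ext i j
      fin_cases i <;> fin_cases j <;>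
        simp [hD, Matrix.mul_apply, Fin.sum_univ_two, hst, hts] <;>
        linear_combination c * hts
  have hinvD : (⅟D : Matrix (Fin 2) (Fin 2) R) = !![0, s; -1, c * s] := rfl
  have hVW : V * ⅟D * W = 0 := by
    ext i j
    simp [hinvD, hV, hW, Matrix.mul_apply, Fin.sum_univ_two]
  letI : Invertible S := hS.invertible
  have hSchur : S - V * ⅟D * W = S := by rw [hVW, sub_zero]
  letI instSch : Invertible (S - V * ⅟D * W) := by rw [hSchur]; exact hS.invertible
  letI instFB : Invertible (Matrix.fromBlocks S V W D) := Matrix.fromBlocks₂₂Invertible S V W D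
  letI instE : Invertible (enlargedS S v w c t) := instFB
  refine ⟨isUnit_of_invertible _, fun k B b => ?_⟩
  set b' : Matrix (Fin k) (Fin 2) R := Matrix.of fun i j => if j = 0 then b i 0 else 0 with hb'
  have hBe : enlargedB B b = Matrix.fromCols B b' := rfl
  have hSS : ⅟(S - V * ⅟D * W) = S⁻¹ := by
    rw [Matrix.invOf_eq_nonsing_inv (S - V * ⅟D * W), hSchur]
  have hinv2 : (enlargedS S v w c t)⁻¹ =
      Matrix.fromBlocks S⁻¹ (-(S⁻¹ * V * ⅟D))
        (-(⅟D * W * S⁻¹)) (⅟D + ⅟D * W * S⁻¹ * V * ⅟D) := by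
    rw [show (enlargedS S v w c t)⁻¹ = (Matrix.fromBlocks S V W D)⁻¹ from rfl,
      ← Matrix.invOf_eq_nonsing_inv, Matrix.invOf_fromBlocks₂₂_eq, hSS]
  have hDi : D⁻¹ = !![0, s; -1, c * s] := by
    rw [← Matrix.invOf_eq_nonsing_inv]; exact hinvD
  have h1 : V * (D⁻¹ * b'ᵀ) = 0 := by
    ext i j
    simp [hDi, hV, hb', Matrix.mul_apply, Matrix.vecMul, dotProduct,
      Fin.sum_univ_two]
  have hbD : b' * D⁻¹ * W = 0 := by
    ext i j
    simp [hDi, hW, hb', Matrix.mul_apply, Matrix.vecMul, dotProduct,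
      Fin.sum_univ_two]
  have h2 : ∀ X : Matrix (Fin n) (Fin k) R, b' * (D⁻¹ * (W * X)) = 0 := by
    intro X
    rw [← Matrix.mul_assoc, ← Matrix.mul_assoc, hbD, Matrix.zero_mul]
  have h3 : b' * (D⁻¹ * b'ᵀ) = 0 := by
    ext i j
    simp [hDi, hb', Matrix.mul_apply, Matrix.vecMul, dotProduct,
      Fin.sum_univ_two]
  rw [hBe, hinv2, Matrix.fromCols_mul_fromBlocks, Matrix.transpose_fromCols,
    Matrix.fromCols_mul_fromRows]
  simp only [Matrix.mul_add, Matrix.add_mul, Matrix.mul_neg, Matrix.neg_mul, Matrix.mul_assoc]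
  simp [h1, h2, h3]
end

section
/- Let R be a commutative ring, s a unit of R, and set z := s − s⁻¹. Let A be an n×n matrix over R, B a k×n matrix, and Λ a symmetric k×k matrix (Λᵀ = Λ). Suppose the matrix S := s·A − s⁻¹·Aᵀ is invertible. Let Ā be the (n+k)×(n+k) block matrix [[A, Bᵀ], [B, Λ]]. Then det(s·Ā − s⁻¹·Āᵀ) = det S · det(z·Λ − z²·(B·S⁻¹·Bᵀ)). (This is the algebraic identity underlying the factorization ∇_{L_S}(z) = ∇_{K_S}(z)·Γ_S(z) of the Conway polynomial, where Γ_S(z) = det(zΛ − z²BS⁻¹Bᵀ).) -/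
open Matrix

/-- The algebraic identity behind the factorization `∇_{L_S}(z) = ∇_{K_S}(z) Γ_S(z)`:
if `Ā = [[A, Bᵀ], [B, Λ]]` with `Λ` symmetric, `s` a unit, `z = s - s⁻¹`, and
`S = s•A - s⁻¹•Aᵀ` invertible, then
`det (s•Ā - s⁻¹•Āᵀ) = det S · det (z•Λ - z²•(B S⁻¹ Bᵀ))`. -/
theorem stmt_4 (R : Type*) [CommRing R] (n k : ℕ) (s : Rˣ)
    (A : Matrix (Fin n) (Fin n) R) (B : Matrix (Fin k) (Fin n) R)
    (Λ : Matrix (Fin k) (Fin k) R) (hΛ : Λᵀ = Λ)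
    (hS : IsUnit ((s : R) • A - ((s⁻¹ : Rˣ) : R) • Aᵀ)) :
    ((s : R) • Matrix.fromBlocks A Bᵀ B Λ
        - ((s⁻¹ : Rˣ) : R) • (Matrix.fromBlocks A Bᵀ B Λ)ᵀ).det =
      ((s : R) • A - ((s⁻¹ : Rˣ) : R) • Aᵀ).det *
        (((s : R) - ((s⁻¹ : Rˣ) : R)) • Λ
          - ((s : R) - ((s⁻¹ : Rˣ) : R)) ^ 2 •
            (B * ((s : R) • A - ((s⁻¹ : Rˣ) : R) • Aᵀ)⁻¹ * Bᵀ)).det := by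
  set z : R := (s : R) - ((s⁻¹ : Rˣ) : R) with hz
  set S : Matrix (Fin n) (Fin n) R := (s : R) • A - ((s⁻¹ : Rˣ) : R) • Aᵀ with hSdef
  have hblock : (s : R) • Matrix.fromBlocks A Bᵀ B Λ
      - ((s⁻¹ : Rˣ) : R) • (Matrix.fromBlocks A Bᵀ B Λ)ᵀ
      = Matrix.fromBlocks S (z • Bᵀ) (z • B) (z • Λ) := by
    rw [Matrix.fromBlocks_transpose, hΛ, Matrix.fromBlocks_smul, Matrix.fromBlocks_smul]
    ext i j
    cases i <;> cases j <;>
      simp [Matrix.fromBlocks, hz, hSdef, sub_smul, Matrix.sub_apply, Matrix.smul_apply]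
  rw [hblock]
  have := hS.nonempty_invertible
  cases this with
  | intro inst =>
    rw [Matrix.det_fromBlocks₁₁]
    congr 1
    rw [Matrix.invOf_eq_nonsing_inv]
    simp [Matrix.smul_mul, Matrix.mul_smul, smul_smul, sq]
end

section
/- Let Σ be the submonoid of ℤ[t,t⁻¹] consisting of all f with f(1) = 1. Then the elements of Σ map to units of ℤ[[u]] under θ̃, and the induced ring homomorphism from the localization Σ⁻¹ℤ[t,t⁻¹] to ℤ[[u]] (obtained by lifting θ̃ through the localization) is injective. -/
open LaurentPolynomial

lemma intC_eq (a : ℤ) : (Polynomial.C a : Polynomial ℤ) = (a : Polynomial ℤ) := by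
  simp [Polynomial.C_eq_intCast]

/-- Ring homs out of `ℤ[T;T⁻¹]` are determined by their value on `T 1`. -/
lemma laurent_ringHom_ext {S : Type*} [CommRing S] {f g : LaurentPolynomial ℤ →+* S}
    (h : f (T 1) = g (T 1)) : f = g := by
  have hpoly : f.comp Polynomial.toLaurent = g.comp Polynomial.toLaurent := by
    refine Polynomial.ringHom_ext (fun a => ?_) ?_
    · rw [intC_eq, map_intCast, map_intCast]
    · simpa [Polynomial.toLaurent_X] using h
  have hTn : ∀ n : ℕ, f (T (n : ℤ)) = g (T (n : ℤ)) := by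
    intro n
    rw [show ((n : ℤ)) = n * 1 by ring, ← T_pow, map_pow, map_pow, h]
  refine RingHom.ext fun p => ?_
  induction' p using LaurentPolynomial.induction_on_mul_T with q n
  have h1 : f (T (-(n : ℤ))) * f (T (n : ℤ)) = 1 := by
    rw [← map_mul, ← T_add, neg_add_cancel, T_zero, map_one]
  have h2 : g (T (-(n : ℤ))) * g (T (n : ℤ)) = 1 := by
    rw [← map_mul, ← T_add, neg_add_cancel, T_zero, map_one]
  have hn := hTn n
  have hneg : f (T (-(n : ℤ))) = g (T (-(n : ℤ))) := by
    linear_combination g (T (-(n:ℤ))) * h1 - f (T (-(n:ℤ))) * h2 +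
      0 * hn - f (T (-(n:ℤ))) * g (T (-(n:ℤ))) * hn
  rw [map_mul, map_mul, hneg, ← RingHom.comp_apply, ← RingHom.comp_apply, hpoly]

lemma theta_injective (θ : LaurentPolynomial ℤ →+* PowerSeries ℤ)
    (hθ : θ (T 1) = 1 + PowerSeries.X) : Function.Injective θ := by
  have hφ : Function.Injective (θ.comp Polynomial.toLaurent) := by
    have heq : θ.comp Polynomial.toLaurent =
        (Polynomial.coeToPowerSeries.ringHom).comp
          (Polynomial.algEquivAevalXAddC (1 : ℤ)).toRingEquiv.toRingHom := by
      refine Polynomial.ringHom_ext (fun a => ?_) ?_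
      · simp [RingHom.comp_apply, intC_eq, map_intCast]
      · simp [Polynomial.toLaurent_X, hθ, Polynomial.algEquivAevalXAddC,
          Polynomial.coeToPowerSeries.ringHom_apply, add_comm]
    rw [heq]
    exact (Polynomial.coe_injective ℤ).comp (Polynomial.algEquivAevalXAddC (1 : ℤ)).injective
  rw [injective_iff_map_eq_zero]
  intro f hf
  obtain ⟨n, f', hf'⟩ := f.exists_T_pow
  have h0 : f' = 0 := by
    apply hφ
    simp [RingHom.comp_apply, hf', map_mul, hf]
  have hz : f * T (n : ℤ) = 0 := by rw [← hf', h0, map_zero]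
  exact (isUnit_T (n : ℤ)).mul_left_eq_zero.mp (by rw [mul_comm] at hz ⊢; exact hz)

/-- The submonoid `Σ` of `ℤ[t,t⁻¹]` of all `f` with `f(1) = 1`, where `ev` is the
evaluation homomorphism `t ↦ 1`. -/
noncomputable def sigmaSubmonoid (ev : LaurentPolynomial ℤ →+* ℤ) : Submonoid (LaurentPolynomial ℤ) where
  carrier := {f | ev f = 1}
  one_mem' := map_one ev
  mul_mem' := by
    intro a b ha hb
    simp only [Set.mem_setOf_eq, map_mul] at *
    rw [ha, hb, mul_one]

/-- Elements of `Σ = {f | f(1) = 1}` map to units of `ℤ[[u]]` under `θ̃ : t ↦ 1 + u`,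
and the induced homomorphism `Σ⁻¹ℤ[t,t⁻¹] → ℤ[[u]]` is injective. -/
theorem stmt_7 (θ : LaurentPolynomial ℤ →+* PowerSeries ℤ)
    (hθ : θ (T 1) = 1 + PowerSeries.X)
    (ev : LaurentPolynomial ℤ →+* ℤ) (hev : ev (T 1) = 1) :
    ∃ h : ∀ y : sigmaSubmonoid ev, IsUnit (θ (y : LaurentPolynomial ℤ)),
      Function.Injective
        ⇑(IsLocalization.lift (M := sigmaSubmonoid ev)
            (S := Localization (sigmaSubmonoid ev)) (g := θ) h) := by
  have hE : ev = (PowerSeries.constantCoeff (R := ℤ)).comp θ := by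
    apply laurent_ringHom_ext
    simp [RingHom.comp_apply, hθ, hev]
  have hinj := theta_injective θ hθ
  have h : ∀ y : sigmaSubmonoid ev, IsUnit (θ (y : LaurentPolynomial ℤ)) := by
    intro y
    rw [PowerSeries.isUnit_iff_constantCoeff]
    have hy : ev (y : LaurentPolynomial ℤ) = 1 := y.2
    rw [DFunLike.congr_fun hE (y : LaurentPolynomial ℤ)] at hy
    rw [show PowerSeries.constantCoeff (R := ℤ) (θ ↑y) = 1 from hy]
    exact isUnit_one
  refine ⟨h, ?_⟩
  rw [IsLocalization.lift_injective_iff]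
  intro x y
  constructor
  · intro hxy
    have := congrArg (IsLocalization.lift (M := sigmaSubmonoid ev)
      (S := Localization (sigmaSubmonoid ev)) (g := θ) h) hxy
    simpa [IsLocalization.lift_eq] using this
  · intro hxy
    exact congrArg _ (hinj hxy)
end

section
/- Let F be the free group on m generators x₁,…,x_m, let η : F → ℤ[t,t⁻¹] be the monoid homomorphism sending every generator xᵢ to t, and let δ : F → (Fin m → ℤ[t,t⁻¹]) be any function satisfying δ(xᵢ) = (i-th standard basis vector) for all i and δ(g·h) = η(g)·δ(h) + δ(g) for all g, h ∈ F. Let I be the ideal of ℤ[t,t⁻¹] generated by t − 1. Then for every natural number q and every g in the q-th term of the lower central series of F (with the convention that the 0-th term is F itself and the (q+1)-st term is the commutator [F, F_q], so that this term is F_{q+1} in the classical 1-indexed notation), every coordinate δ(g)(i) lies in the ideal power I^q. -/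
open LaurentPolynomial

namespace Stmt11Aux

variable {m : ℕ}

open scoped commutatorElement

noncomputable abbrev II : Ideal (LaurentPolynomial ℤ) :=
  Ideal.span {(T 1 : LaurentPolynomial ℤ) - 1}

lemma eta_unit (η : FreeGroup (Fin m) →* LaurentPolynomial ℤ) (g : FreeGroup (Fin m)) :
    η g * η g⁻¹ = 1 := by
  rw [← map_mul, mul_inv_cancel, map_one]

section

variable (η : FreeGroup (Fin m) →* LaurentPolynomial ℤ)
  (δ : FreeGroup (Fin m) → (Fin m → LaurentPolynomial ℤ))
  (hδ2 : ∀ g h : FreeGroup (Fin m), δ (g * h) = η g • δ h + δ g)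

include hδ2

lemma delta_one : δ 1 = 0 := by
  have h := hδ2 1 1
  rw [mul_one, map_one, one_smul] at h
  exact (left_eq_add.mp h)

lemma delta_inv (g : FreeGroup (Fin m)) (i : Fin m) :
    δ g⁻¹ i = -(η g⁻¹ * δ g i) := by
  have h := hδ2 g⁻¹ g
  rw [inv_mul_cancel, delta_one η δ hδ2] at h
  have := congrFun h i
  simp only [Pi.zero_apply, Pi.add_apply, Pi.smul_apply, smul_eq_mul] at this
  linear_combination -this

lemma delta_comm (g h : FreeGroup (Fin m)) (i : Fin m) :
    δ ⁅g, h⁆ i = (η g - 1) * δ h i - (η h - 1) * δ g i := by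
  have ha := eta_unit η g
  have hb := eta_unit η h
  rw [commutatorElement_def, hδ2, hδ2, hδ2]
  simp only [Pi.add_apply, Pi.smul_apply, smul_eq_mul, map_mul,
    delta_inv η δ hδ2]
  linear_combination (-(η h * η h⁻¹ * δ h i) - η h * δ g i) * ha + (-(δ h i)) * hb

lemma eta_comm (g h : FreeGroup (Fin m)) : η ⁅g, h⁆ = 1 := by
  have ha := eta_unit η g
  have hb := eta_unit η h
  rw [commutatorElement_def, map_mul, map_mul, map_mul]
  linear_combination η h * η h⁻¹ * ha + hb

/-- The subgroup of elements whose Fox derivative lies in `I^n` and whose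
`η`-image is `1 mod I^(n+1)`. -/
noncomputable def S (n : ℕ) : Subgroup (FreeGroup (Fin m)) where
  carrier := {g | (∀ i, δ g i ∈ II ^ n) ∧ η g - 1 ∈ II ^ (n + 1)}
  one_mem' := by
    constructor
    · intro i
      rw [delta_one η δ hδ2]
      exact Submodule.zero_mem _
    · simp
  mul_mem' := by
    rintro g h ⟨hg1, hg2⟩ ⟨hh1, hh2⟩
    constructor
    · intro i
      rw [hδ2]
      simp only [Pi.add_apply, Pi.smul_apply, smul_eq_mul]
      exact add_mem (Ideal.mul_mem_left _ _ (hh1 i)) (hg1 i)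
    · have : η (g * h) - 1 = η g * (η h - 1) + (η g - 1) := by
        rw [map_mul]; ring
      rw [this]
      exact add_mem (Ideal.mul_mem_left _ _ hh2) hg2
  inv_mem' := by
    rintro g ⟨hg1, hg2⟩
    constructor
    · intro i
      rw [delta_inv η δ hδ2]
      exact neg_mem (Ideal.mul_mem_left _ _ (hg1 i))
    · have hu := eta_unit η g
      have : η g⁻¹ - 1 = -(η g⁻¹) * (η g - 1) := by linear_combination hu
      rw [this]
      exact Ideal.mul_mem_left _ _ hg2

end

lemma eta_sub_one_mem (η : FreeGroup (Fin m) →* LaurentPolynomial ℤ)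
    (hη : ∀ i : Fin m, η (FreeGroup.of i) = T 1) (g : FreeGroup (Fin m)) :
    η g - 1 ∈ II := by
  induction g using FreeGroup.induction_on with
  | C1 => simp
  | of i =>
      show η (FreeGroup.of i) - 1 ∈ II
      rw [hη]; exact Ideal.subset_span rfl
  | inv_of i h =>
      show η (FreeGroup.of i)⁻¹ - 1 ∈ II
      have hu := eta_unit η (FreeGroup.of i)
      have : η (FreeGroup.of i)⁻¹ - 1
          = -(η (FreeGroup.of i)⁻¹) * (η (FreeGroup.of i) - 1) := by
        linear_combination hu
      rw [this]
      exact Ideal.mul_mem_left _ _ h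
  | mul g h hg hh =>
      have : η (g * h) - 1 = η g * (η h - 1) + (η g - 1) := by
        rw [map_mul]; ring
      rw [this]
      exact add_mem (Ideal.mul_mem_left _ _ hh) hg

lemma key (η : FreeGroup (Fin m) →* LaurentPolynomial ℤ)
    (hη : ∀ i : Fin m, η (FreeGroup.of i) = T 1)
    (δ : FreeGroup (Fin m) → (Fin m → LaurentPolynomial ℤ))
    (hδ2 : ∀ g h : FreeGroup (Fin m), δ (g * h) = η g • δ h + δ g) :
    ∀ q : ℕ, Subgroup.lowerCentralSeries (⊤ : Subgroup (FreeGroup (Fin m))) q ≤ S η δ hδ2 q := by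
  intro q
  induction q with
  | zero =>
      intro g _
      refine ⟨fun i => by simp [Ideal.one_eq_top], ?_⟩
      simpa using eta_sub_one_mem η hη g
  | succ q ih =>
      rw [Subgroup.lowerCentralSeries_succ]
      refine Subgroup.commutator_le.mpr fun p hp g' _ => ?_
      obtain ⟨hp1, hp2⟩ := ih hp
      constructor
      · intro i
        rw [delta_comm η δ hδ2]
        refine sub_mem ?_ ?_
        · exact Ideal.mul_mem_right _ _ hp2
        · rw [pow_succ']
          exact Ideal.mul_mem_mul (eta_sub_one_mem η hη g') (hp1 i)
      · rw [eta_comm η δ hδ2, sub_self]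
        exact Submodule.zero_mem _

end Stmt11Aux

/-- If `δ : F → ℤ[t,t⁻¹]^m` satisfies the Fox-derivative rules (with `η : xᵢ ↦ t`), and
`g` lies in the `q`-th term of the lower central series of `F` (0-indexed, so this is
`F_{q+1}` classically), then every coordinate of `δ(g)` lies in `I^q`, where
`I = (t - 1)`. -/
theorem stmt_11 (m : ℕ) (η : FreeGroup (Fin m) →* LaurentPolynomial ℤ)
    (hη : ∀ i : Fin m, η (FreeGroup.of i) = T 1)
    (δ : FreeGroup (Fin m) → (Fin m → LaurentPolynomial ℤ))
    (hδ1 : ∀ i : Fin m, δ (FreeGroup.of i) = Pi.single i 1)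
    (hδ2 : ∀ g h : FreeGroup (Fin m), δ (g * h) = η g • δ h + δ g)
    (q : ℕ) (g : FreeGroup (Fin m))
    (hg : g ∈ Subgroup.lowerCentralSeries (⊤ : Subgroup (FreeGroup (Fin m))) q) (i : Fin m) :
    δ g i ∈ (Ideal.span {(T 1 : LaurentPolynomial ℤ) - 1}) ^ q :=
  (Stmt11Aux.key η hη δ hδ2 q hg).1 i
end

section
/- Let σ be the ring automorphism of the Laurent polynomial ring ℚ[t,t⁻¹] determined by t ↦ t⁻¹. If f ∈ ℚ[t,t⁻¹] satisfies σ(f) = −f, then there exists g ∈ ℚ[t,t⁻¹] such that f = (t − t⁻¹)·g and σ(g) = g. -/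
open LaurentPolynomial Polynomial

section aux
variable (σ : LaurentPolynomial ℚ ≃+* LaurentPolynomial ℚ) (hσ : σ (T 1) = T (-1))

theorem aux_sigma_C (b : ℚ) : σ (LaurentPolynomial.C b) = LaurentPolynomial.C b := by
  have h : (σ : LaurentPolynomial ℚ →+* LaurentPolynomial ℚ).comp
      (LaurentPolynomial.C : ℚ →+* LaurentPolynomial ℚ) = LaurentPolynomial.C :=
    Subsingleton.elim _ _
  exact RingHom.congr_fun h b

include hσ in
theorem aux_sigma_Tneg : σ (T (-1)) = T 1 := by
  have h1 : (T 1 : LaurentPolynomial ℚ) * T (-1) = 1 := by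
    rw [← T_add]; simp
  have h2 : σ (T 1) * σ (T (-1)) = 1 := by rw [← map_mul, h1, map_one]
  rw [hσ] at h2
  calc σ (T (-1)) = (T 1 * T (-1)) * σ (T (-1)) := by rw [h1, one_mul]
    _ = T 1 * (T (-1) * σ (T (-1))) := by ring
    _ = T 1 := by rw [h2, mul_one]

include hσ in
theorem aux_sigma_T (n : ℤ) : σ (T n) = T (-n) := by
  induction n using Int.induction_on with
  | zero => simp [T_zero]
  | succ k ih =>
      rw [T_add, map_mul, ih, hσ, ← T_add]; ring_nf
  | pred k ih =>
      have : (-(k : ℤ) - 1) = (-k) + (-1) := by ring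
      rw [this, T_add, map_mul, ih, aux_sigma_Tneg σ hσ, ← T_add]
      ring_nf

end aux

/-- evaluation at a unit c : ℚˣ, as an AlgHom. -/
noncomputable def evAt (c : ℚˣ) : LaurentPolynomial ℚ →ₐ[ℚ] ℚ :=
  AddMonoidAlgebra.lift ℚ ℚ ℤ ((Units.coeHom ℚ).comp (zpowersHom ℚˣ c))

theorem evAt_T (c : ℚˣ) (n : ℤ) : evAt c (T n) = (c : ℚ) ^ n := by
  have : (T n : LaurentPolynomial ℚ) = AddMonoidAlgebra.single n 1 := rfl
  rw [evAt, this, AddMonoidAlgebra.lift_single]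
  simp [zpowersHom]

theorem evAt_C (c : ℚˣ) (b : ℚ) : evAt c (C b) = b := by
  have : (C b : LaurentPolynomial ℚ) = AddMonoidAlgebra.single 0 b := rfl
  rw [evAt, this, AddMonoidAlgebra.lift_single]
  simp [zpowersHom]

theorem evAt_toLaurent (c : ℚˣ) (p : ℚ[X]) :
    evAt c (Polynomial.toLaurent p) = p.eval (c : ℚ) := by
  have h : ((evAt c : LaurentPolynomial ℚ →+* ℚ).comp
      (Polynomial.toLaurent : ℚ[X] →+* LaurentPolynomial ℚ))
      = Polynomial.evalRingHom (c : ℚ) := by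
    apply Polynomial.ringHom_ext
    · intro r
      simp [Polynomial.toLaurent_C, evAt_C]
    · simp [Polynomial.toLaurent_X, evAt_T]
  exact RingHom.congr_fun h p

/-- If `σ` is the automorphism `t ↦ t⁻¹` of `ℚ[t,t⁻¹]` and `σ(f) = -f`, then
`f = (t - t⁻¹)·g` with `σ(g) = g`. -/
theorem stmt_13 (σ : LaurentPolynomial ℚ ≃+* LaurentPolynomial ℚ)
    (hσ : σ (T 1) = T (-1))
    (f : LaurentPolynomial ℚ) (hf : σ f = -f) :
    ∃ g : LaurentPolynomial ℚ, f = (T 1 - T (-1)) * g ∧ σ g = g := by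
  -- evaluation homs kill f at ±1
  have hev : ∀ c : ℚˣ, (c:ℚ)^(2:ℤ) = 1 → evAt c f = 0 := by
    intro c hc
    have hcomp : ((evAt c : LaurentPolynomial ℚ →+* ℚ).comp (σ : LaurentPolynomial ℚ →+* LaurentPolynomial ℚ))
        = (evAt c : LaurentPolynomial ℚ →+* ℚ) := by
      apply AddMonoidAlgebra.ringHom_ext
      · intro b
        have hb : (AddMonoidAlgebra.single (0:ℤ) b : LaurentPolynomial ℚ)
            = LaurentPolynomial.C b := rfl
        simp [hb, aux_sigma_C σ, evAt_C]
      · intro a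
        have hT : (AddMonoidAlgebra.single (a:ℤ) (1:ℚ) : LaurentPolynomial ℚ) = T a := rfl
        simp only [RingHom.coe_comp, Function.comp_apply, RingEquiv.coe_toRingHom, hT,
          AlgHom.coe_toRingHom, aux_sigma_T σ hσ, evAt_T]
        have hcz : (c:ℚ) ≠ 0 := c.ne_zero
        have : (c:ℚ)^(-a) = (c:ℚ)^a * ((c:ℚ)^(2:ℤ))^(-a) := by
          rw [← zpow_mul, ← zpow_add₀ hcz]; ring_nf
        rw [this, hc, one_zpow, mul_one]
    have := RingHom.congr_fun hcomp f
    simp only [RingHom.coe_comp, Function.comp_apply, RingEquiv.coe_toRingHom, hf, map_neg,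
      AlgHom.coe_toRingHom] at this
    linarith [this]
  have h1 : evAt 1 f = 0 := hev 1 (by norm_num)
  have hm1 : evAt (-1) f = 0 := hev (-1) (by norm_num)
  -- write f as polynomial times T power
  obtain ⟨n, p, hp⟩ := f.exists_T_pow
  have hp1 : p.eval 1 = 0 := by
    have := congrArg (evAt 1) hp
    rw [evAt_toLaurent, map_mul, evAt_T] at this
    simpa [h1] using this
  have hpm1 : p.eval (-1) = 0 := by
    have := congrArg (evAt (-1)) hp
    rw [evAt_toLaurent, map_mul, evAt_T] at this
    rw [hm1, zero_mul] at this
    simpa using this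
  -- divisibility in ℚ[X]
  have hd1 : (X - Polynomial.C 1) ∣ p := (Polynomial.dvd_iff_isRoot).2 hp1
  obtain ⟨q, hq⟩ := hd1
  have hq1 : q.eval (-1) = 0 := by
    have := congrArg (Polynomial.eval (-1)) hq
    simp at this
    linarith [this]
  have hd2 : (X - Polynomial.C (-1)) ∣ q := (Polynomial.dvd_iff_isRoot).2 hq1
  obtain ⟨r, hr⟩ := hd2
  -- assemble
  have hfT : f = Polynomial.toLaurent p * T (-n) := by
    have : f = f * T n * T (-n) := by
      rw [mul_assoc, ← T_add]; simp
    rw [this, ← hp]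
  set d : LaurentPolynomial ℚ := T 1 - T (-1) with hd
  have key : Polynomial.toLaurent p = d * (T 1 * Polynomial.toLaurent r) := by
    rw [hq, hr]
    have e1 : Polynomial.toLaurent ((X - Polynomial.C (1:ℚ)) * ((X - Polynomial.C (-1)) * r))
        = (T 1 - 1) * ((T 1 + 1) * Polynomial.toLaurent r) := by
      simp [Polynomial.toLaurent_X, Polynomial.toLaurent_C, sub_neg_eq_add]
    rw [e1]
    have e2 : d * T 1 = (T 1 - 1) * (T 1 + 1) := by
      have t2 : (T 1 : LaurentPolynomial ℚ) * T 1 = T 2 := by rw [← T_add]; norm_num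
      have h11 : (T (-1) : LaurentPolynomial ℚ) * T 1 = 1 := by rw [← T_add]; simp
      calc d * T 1 = T 1 * T 1 - T (-1) * T 1 := by rw [hd]; ring
        _ = T 2 - 1 := by rw [t2, h11]
        _ = T 1 * T 1 - 1 := by rw [t2]
        _ = (T 1 - 1) * (T 1 + 1) := by ring
    calc (T 1 - 1) * ((T 1 + 1) * Polynomial.toLaurent r)
        = (d * T 1) * Polynomial.toLaurent r := by rw [e2]; ring
      _ = d * (T 1 * Polynomial.toLaurent r) := by ring
  refine ⟨T 1 * Polynomial.toLaurent r * T (-n), ?_, ?_⟩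
  · rw [hfT, key]; ring
  · -- symmetry from cancellation
    set g := T 1 * Polynomial.toLaurent r * T (-n) with hg
    have hfg : f = d * g := by rw [hfT, key, hg]; ring
    have hσd : σ d = -d := by
      rw [hd, map_sub, hσ, aux_sigma_Tneg σ hσ]; ring
    have hdne : d ≠ 0 := by
      intro h
      have hc2 : ((Units.mk0 (2:ℚ) (by norm_num) : ℚˣ) : ℚ) = 2 := rfl
      have hd2 : evAt (Units.mk0 (2:ℚ) (by norm_num)) d = 3/2 := by
        rw [hd, map_sub, evAt_T, evAt_T, hc2]
        norm_num
      rw [h, map_zero] at hd2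
      norm_num at hd2
    have : d * σ g = d * g := by
      have h1 : σ f = σ d * σ g := by rw [hfg, map_mul]
      rw [hσd, hf, hfg] at h1
      have h2 : -(d * g) = -(d * σ g) := by rw [h1, neg_mul]
      exact (neg_injective h2).symm
    exact mul_left_cancel₀ hdne this
end

section
/- Let K = ℚ(t) be the field of rational functions over ℚ, let σ be the field automorphism of K determined by t ↦ t⁻¹, and set z := t − t⁻¹ ∈ K. Call a polynomial f ∈ ℚ[Z] norm-like if there exists h ∈ K with f(z) = h·σ(h), where f(z) denotes the evaluation of f at z in K. If f ∈ ℚ[Z] is norm-like, then f contains only even powers of Z; that is, every odd-degree coefficient of f vanishes. -/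
open Polynomial

private lemma aux_key (p : ℚ[X]) :
    algebraMap ℚ[X] (RatFunc ℚ)
        (∑ i ∈ Finset.range (p.natDegree + 1),
          C (p.coeff i) * X ^ (p.natDegree - i) * (X ^ 2 - 1) ^ i)
      = RatFunc.X ^ p.natDegree *
          Polynomial.aeval (RatFunc.X - (RatFunc.X)⁻¹ : RatFunc ℚ) p := by
  have hx : (RatFunc.X : RatFunc ℚ) ≠ 0 := RatFunc.X_ne_zero
  rw [aeval_eq_sum_range, Finset.mul_sum, map_sum]
  refine Finset.sum_congr rfl fun i hi => ?_
  have hin : i ≤ p.natDegree := Nat.lt_succ_iff.mp (Finset.mem_range.mp hi)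
  simp only [map_mul, map_pow, map_sub, map_one, RatFunc.algebraMap_X, RatFunc.algebraMap_C]
  rw [Algebra.smul_def, show algebraMap ℚ (RatFunc ℚ) = RatFunc.C from Subsingleton.elim _ _]
  have h1 : (RatFunc.X : RatFunc ℚ) ^ p.natDegree
      = RatFunc.X ^ (p.natDegree - i) * RatFunc.X ^ i := by
    rw [← pow_add, Nat.sub_add_cancel hin]
  have h2 : (RatFunc.X ^ 2 - 1 : RatFunc ℚ)
      = RatFunc.X * (RatFunc.X - (RatFunc.X)⁻¹) := by
    field_simp
  rw [h1, h2, mul_pow, ← mul_assoc, mul_assoc (RatFunc.C (p.coeff i)), mul_comm]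
  ring

private lemma aux_trans : Transcendental ℚ (RatFunc.X - (RatFunc.X)⁻¹ : RatFunc ℚ) := by
  rintro ⟨p, hp0, hpz⟩
  set n := p.natDegree with hn
  have hQ : (∑ i ∈ Finset.range (n + 1),
      C (p.coeff i) * X ^ (n - i) * (X ^ 2 - 1) ^ i) = 0 := by
    apply RatFunc.algebraMap_injective ℚ
    rw [aux_key, hpz, mul_zero, map_zero]
  have hco : (∑ i ∈ Finset.range (n + 1),
      C (p.coeff i) * X ^ (n - i) * (X ^ 2 - 1) ^ i).coeff (2 * n) = p.coeff n := by
    rw [Finset.sum_range_succ, coeff_add]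
    have hmon : ((X : ℚ[X]) ^ 2 - 1).Monic := by
      have := monic_X_pow_sub_C (1 : ℚ) (n := 2) (by norm_num)
      simpa using this
    have hdeg : ((X : ℚ[X]) ^ 2 - 1).natDegree = 2 := by
      have := natDegree_X_pow_sub_C (n := 2) (r := (1 : ℚ))
      simpa using this
    have h1 : (∑ i ∈ Finset.range n,
        C (p.coeff i) * X ^ (n - i) * (X ^ 2 - 1) ^ i).coeff (2 * n) = 0 := by
      rw [finset_sum_coeff]
      refine Finset.sum_eq_zero fun i hi => ?_
      have hi' : i < n := Finset.mem_range.mp hi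
      apply coeff_eq_zero_of_natDegree_lt
      calc (C (p.coeff i) * X ^ (n - i) * (X ^ 2 - 1) ^ i).natDegree
          ≤ (C (p.coeff i) * X ^ (n - i)).natDegree + ((X ^ 2 - 1 : ℚ[X]) ^ i).natDegree :=
            natDegree_mul_le
        _ ≤ (n - i) + 2 * i := by
            gcongr
            · exact natDegree_C_mul_X_pow_le _ _
            · calc ((X ^ 2 - 1 : ℚ[X]) ^ i).natDegree ≤ i * (X ^ 2 - 1 : ℚ[X]).natDegree :=
                  natDegree_pow_le
                _ = 2 * i := by rw [hdeg]; ring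
        _ ≤ n + i := by omega
        _ < 2 * n := by omega
    have h2 : (C (p.coeff n) * X ^ (n - n) * (X ^ 2 - 1) ^ n).coeff (2 * n) = p.coeff n := by
      rw [Nat.sub_self, pow_zero, mul_one, coeff_C_mul]
      have hmp : ((X : ℚ[X]) ^ 2 - 1) ^ n |>.Monic := hmon.pow n
      have hdp : (((X : ℚ[X]) ^ 2 - 1) ^ n).natDegree = 2 * n := by
        rw [hmon.natDegree_pow, hdeg]; ring
      have : (((X : ℚ[X]) ^ 2 - 1) ^ n).coeff (2 * n) = 1 := by
        rw [← hdp]; exact hmp.coeff_natDegree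
      rw [this, mul_one]
    rw [h1, h2, zero_add]
  rw [hQ, coeff_zero] at hco
  exact hp0 (leadingCoeff_eq_zero.mp hco.symm)

private lemma aux_coeff_comp_neg (f : ℚ[X]) (k : ℕ) :
    (f.comp (-X)).coeff k = (-1) ^ k * f.coeff k := by
  induction f using Polynomial.induction_on' with
  | add p q hp hq =>
    rw [add_comp, coeff_add, hp, hq, coeff_add]; ring
  | monomial n a =>
    rw [← C_mul_X_pow_eq_monomial, mul_comp, C_comp, pow_comp, X_comp]
    have hc : ((-X : ℚ[X])) ^ n = C ((-1 : ℚ) ^ n) * X ^ n := by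
      rw [neg_pow, map_pow, map_neg, map_one]
    rw [hc, ← mul_assoc, mul_comm (C a), mul_assoc, coeff_C_mul, coeff_C_mul, coeff_X_pow]
    rcases eq_or_ne n k with rfl | h
    · simp [mul_comm]
    · simp [h, Ne.symm h]

/-- A norm-like polynomial (one with `f(z) = h·σ(h)` in `K = ℚ(t)`, where
`σ : t ↦ t⁻¹` and `z = t - t⁻¹`) has only even powers of its variable. -/
theorem stmt_15 (σ : RatFunc ℚ ≃+* RatFunc ℚ) (hσ : σ RatFunc.X = (RatFunc.X)⁻¹)
    (f : Polynomial ℚ)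
    (hf : ∃ h : RatFunc ℚ,
      Polynomial.aeval (RatFunc.X - (RatFunc.X)⁻¹ : RatFunc ℚ) f = h * σ h) :
    ∀ k : ℕ, Odd k → f.coeff k = 0 := by
  obtain ⟨h, hfz⟩ := hf
  set z : RatFunc ℚ := RatFunc.X - (RatFunc.X)⁻¹ with hzdef
  -- σ ∘ σ = id
  have hσ2 : ∀ x : RatFunc ℚ, σ (σ x) = x := by
    have hcomp : (σ : RatFunc ℚ →+* RatFunc ℚ).comp (σ : RatFunc ℚ →+* RatFunc ℚ)
        = RingHom.id (RatFunc ℚ) := by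
      apply IsLocalization.ringHom_ext (nonZeroDivisors ℚ[X])
      apply Polynomial.ringHom_ext
      · intro a
        have : ((σ : RatFunc ℚ →+* RatFunc ℚ).comp
            ((σ : RatFunc ℚ →+* RatFunc ℚ).comp (algebraMap ℚ (RatFunc ℚ))))
            = algebraMap ℚ (RatFunc ℚ) := Subsingleton.elim _ _
        have := RingHom.congr_fun this a
        simpa [RatFunc.algebraMap_C, ← RatFunc.algebraMap_eq_C] using this
      · simp [RatFunc.algebraMap_X, hσ, map_inv₀]
    exact fun x => RingHom.congr_fun hcomp x
  -- σ is a ℚ-algebra map on values of aeval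
  have hσaeval : ∀ (p : ℚ[X]) (w : RatFunc ℚ),
      σ (Polynomial.aeval w p) = Polynomial.aeval (σ w) p := by
    intro p w
    rw [Polynomial.aeval_def, Polynomial.aeval_def, ← RingEquiv.coe_toRingHom, Polynomial.hom_eval₂]
    congr 1
    exact Subsingleton.elim _ _
  have hσz : σ z = -z := by
    rw [hzdef, map_sub, hσ, map_inv₀, hσ, inv_inv]
    ring
  -- f(z) = f(-z)
  have hsym : Polynomial.aeval z f = Polynomial.aeval (-z) f := by
    conv_lhs => rw [hfz]
    have := hσaeval f z
    rw [hfz, map_mul, hσ2] at this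
    rw [← hσz, ← this]
    ring
  -- hence f = f.comp (-X)
  have hcompeq : f = f.comp (-X) := by
    have hinj := (transcendental_iff_injective.mp aux_trans)
    apply hinj
    rw [hsym]
    rw [Polynomial.aeval_comp]
    simp only [map_neg, aeval_X]
    rfl
  intro k hk
  have := congrArg (fun g => g.coeff k) hcompeq
  rw [aux_coeff_comp_neg, hk.neg_one_pow] at this
  linarith
end

section
/- Let K = ℚ(t) be the field of rational functions over ℚ, let σ be the field automorphism of K determined by t ↦ t⁻¹, and set z := t − t⁻¹ ∈ K. If f ∈ ℚ[Z] is norm-like, i.e. there exists h ∈ K with f(z) = h·σ(h), then the constant term f(0) is a square in ℚ: there exists q ∈ ℚ with f(0) = q². -/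
open Polynomial in
/-- `genRev g d p = ∑ coeff i • g^i X^(d-i)`, a "twisted reversal" of `p`. -/
noncomputable def genRev (g : Polynomial ℚ) (d : ℕ) (p : Polynomial ℚ) : Polynomial ℚ :=
  ∑ i ∈ Finset.range (d + 1), C (p.coeff i) * g ^ i * X ^ (d - i)

open Polynomial in
lemma genRev_algebraMap (g : Polynomial ℚ) (d : ℕ) (p : Polynomial ℚ) (hd : p.natDegree ≤ d) :
    algebraMap (Polynomial ℚ) (RatFunc ℚ) (genRev g d p)
      = RatFunc.X ^ d *
        aeval (algebraMap (Polynomial ℚ) (RatFunc ℚ) g * (RatFunc.X)⁻¹) p := by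
  rw [aeval_eq_sum_range' (Nat.lt_succ_of_le hd), genRev, map_sum, Finset.mul_sum]
  refine Finset.sum_congr rfl ?_
  intro i hi
  have hi' : i ≤ d := Nat.lt_succ_iff.mp (Finset.mem_range.mp hi)
  have hX : (RatFunc.X : RatFunc ℚ) ≠ 0 := RatFunc.X_ne_zero
  have hcast : algebraMap (Polynomial ℚ) (RatFunc ℚ) (C (p.coeff i))
      = algebraMap ℚ (RatFunc ℚ) (p.coeff i) := by
    have h1 := eq_ratCast ((algebraMap (Polynomial ℚ) (RatFunc ℚ)).comp
      (C : ℚ →+* Polynomial ℚ)) (p.coeff i)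
    have h2 := eq_ratCast (algebraMap ℚ (RatFunc ℚ)) (p.coeff i)
    simp only [RingHom.comp_apply] at h1
    rw [h1, h2]
  rw [map_mul, map_mul, map_pow, map_pow, RatFunc.algebraMap_X, hcast, mul_pow,
    Algebra.smul_def]
  have hXpow : (RatFunc.X : RatFunc ℚ) ^ d = RatFunc.X ^ (d - i) * RatFunc.X ^ i := by
    rw [← pow_add, Nat.sub_add_cancel hi']
  rw [hXpow, inv_pow]
  field_simp

open Polynomial in
lemma genRev_eval_one (g : Polynomial ℚ) (d : ℕ) (p : Polynomial ℚ) :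
    (genRev g d p).eval 1 = ∑ i ∈ Finset.range (d + 1), p.coeff i * (g.eval 1) ^ i := by
  simp [genRev, eval_finset_sum]

open Polynomial in
lemma genRev_one_eval_one (d : ℕ) (p : Polynomial ℚ) (hd : p.natDegree ≤ d) :
    (genRev 1 d p).eval 1 = p.eval 1 := by
  rw [genRev_eval_one, Polynomial.eval_eq_sum_range' (Nat.lt_succ_of_le hd)]
  simp

open Polynomial in
lemma aux_cancel (s G H : Polynomial ℚ) (hs1 : s.eval 1 = 0) (hs0 : s ≠ 0)
    (hH : H.eval 1 ≠ 0) {a b : ℕ} (hab : a ≤ b) (Q : s ^ b * G = s ^ a * H) :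
    G.eval 1 = H.eval 1 := by
  obtain ⟨c, rfl⟩ := Nat.exists_eq_add_of_le hab
  have Q2 : s ^ a * (s ^ c * G) = s ^ a * H := by rw [← Q]; ring
  have Q3 : s ^ c * G = H := mul_left_cancel₀ (pow_ne_zero a hs0) Q2
  rcases Nat.eq_zero_or_pos c with hc | hc
  · subst hc; simpa using congrArg (Polynomial.eval 1) Q3
  · exfalso
    have hev := congrArg (Polynomial.eval 1) Q3
    rw [Polynomial.eval_mul, Polynomial.eval_pow, hs1, zero_pow hc.ne', zero_mul] at hev
    exact hH hev.symm

open Polynomial in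
lemma sigma_algebraMap (σ : RatFunc ℚ ≃+* RatFunc ℚ) (hσ : σ RatFunc.X = (RatFunc.X)⁻¹)
    (p : Polynomial ℚ) :
    σ (algebraMap (Polynomial ℚ) (RatFunc ℚ) p) = aeval (RatFunc.X)⁻¹ p := by
  let σ' : RatFunc ℚ →ₐ[ℚ] RatFunc ℚ :=
    { toFun := σ
      map_one' := map_one σ
      map_mul' := map_mul σ
      map_zero' := map_zero σ
      map_add' := map_add σ
      commutes' := fun q => by
        rw [eq_ratCast (algebraMap ℚ (RatFunc ℚ)) q]
        exact map_ratCast σ q }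
  have h1 : algebraMap (Polynomial ℚ) (RatFunc ℚ) p = aeval RatFunc.X p := by
    have := Polynomial.aeval_algHom_apply
      (IsScalarTower.toAlgHom ℚ (Polynomial ℚ) (RatFunc ℚ)) Polynomial.X p
    simpa [RatFunc.algebraMap_X] using this.symm
  have h2 := Polynomial.aeval_algHom_apply σ' RatFunc.X p
  have h3 : σ' RatFunc.X = (RatFunc.X)⁻¹ := hσ
  rw [h1]
  calc σ ((Polynomial.aeval RatFunc.X) p) = σ' ((Polynomial.aeval RatFunc.X) p) := rfl
    _ = Polynomial.aeval (σ' RatFunc.X) p := h2.symm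
    _ = Polynomial.aeval (RatFunc.X)⁻¹ p := by rw [h3]

/-- The constant term of a norm-like polynomial (one with `f(z) = h·σ(h)` in
`K = ℚ(t)`, where `σ : t ↦ t⁻¹` and `z = t - t⁻¹`) is a square in `ℚ`. -/
theorem stmt_16 (σ : RatFunc ℚ ≃+* RatFunc ℚ) (hσ : σ RatFunc.X = (RatFunc.X)⁻¹)
    (f : Polynomial ℚ)
    (hf : ∃ h : RatFunc ℚ,
      Polynomial.aeval (RatFunc.X - (RatFunc.X)⁻¹ : RatFunc ℚ) f = h * σ h) :
    ∃ q : ℚ, f.coeff 0 = q ^ 2 := by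
  classical
  obtain ⟨h, hh⟩ := hf
  by_cases h0 : f.coeff 0 = 0
  · exact ⟨0, by simp [h0]⟩
  set A := algebraMap (Polynomial ℚ) (RatFunc ℚ) with hA
  have hX : (RatFunc.X : RatFunc ℚ) ≠ 0 := RatFunc.X_ne_zero
  set m := f.natDegree with hm
  set F : Polynomial ℚ := genRev (Polynomial.X ^ 2 - 1) m f with hF
  -- F in K
  have hzeq : A (Polynomial.X ^ 2 - 1) * (RatFunc.X)⁻¹
      = RatFunc.X - (RatFunc.X)⁻¹ := by
    rw [map_sub, map_pow, RatFunc.algebraMap_X, map_one]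
    field_simp
  have hFalg : A F = RatFunc.X ^ m *
      Polynomial.aeval (RatFunc.X - (RatFunc.X)⁻¹ : RatFunc ℚ) f := by
    rw [hF, genRev_algebraMap _ _ _ (le_refl m), hzeq]
  have hFeval : F.eval 1 = f.coeff 0 := by
    rw [hF, genRev_eval_one]
    have : ((Polynomial.X ^ 2 - 1 : Polynomial ℚ)).eval 1 = 0 := by simp
    rw [this]
    rw [Finset.sum_eq_single_of_mem 0 (Finset.mem_range.mpr (Nat.succ_pos m))]
    · simp
    · intro i _ hi
      simp [zero_pow hi]
  have hFne : F ≠ 0 := fun hF0 => h0 (by rw [← hFeval, hF0]; simp)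
  -- h ≠ 0
  have hhne : h ≠ 0 := by
    intro he
    apply RatFunc.algebraMap_ne_zero hFne
    rw [hFalg, hh, he, zero_mul, mul_zero]
  set N := h.num with hN
  set D := h.denom with hD
  have hNne : N ≠ 0 := RatFunc.num_ne_zero hhne
  have hDne : D ≠ 0 := h.denom_ne_zero
  have hANne : A N ≠ 0 := RatFunc.algebraMap_ne_zero hNne
  have hADne : A D ≠ 0 := RatFunc.algebraMap_ne_zero hDne
  have hhval : h = A N / A D := (RatFunc.num_div_denom h).symm
  have hσh : σ h = Polynomial.aeval ((RatFunc.X : RatFunc ℚ))⁻¹ N / Polynomial.aeval ((RatFunc.X : RatFunc ℚ))⁻¹ D := by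
    rw [hhval, map_div₀, sigma_algebraMap σ hσ N, sigma_algebraMap σ hσ D]
  have hSN : Polynomial.aeval ((RatFunc.X : RatFunc ℚ))⁻¹ N ≠ 0 := by
    rw [← sigma_algebraMap σ hσ N]
    intro e
    exact hANne (σ.injective (e.trans (map_zero σ).symm))
  have hSD : Polynomial.aeval ((RatFunc.X : RatFunc ℚ))⁻¹ D ≠ 0 := by
    rw [← sigma_algebraMap σ hσ D]
    intro e
    exact hADne (σ.injective (e.trans (map_zero σ).symm))
  set dN := N.natDegree with hdN
  set dD := D.natDegree with hdD
  set RevN : Polynomial ℚ := genRev 1 dN N with hRevN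
  set RevD : Polynomial ℚ := genRev 1 dD D with hRevD
  have hRevNalg : A RevN = RatFunc.X ^ dN * Polynomial.aeval ((RatFunc.X : RatFunc ℚ))⁻¹ N := by
    rw [hRevN, genRev_algebraMap _ _ _ (le_refl dN)]; simp
  have hRevDalg : A RevD = RatFunc.X ^ dD * Polynomial.aeval ((RatFunc.X : RatFunc ℚ))⁻¹ D := by
    rw [hRevD, genRev_algebraMap _ _ _ (le_refl dD)]; simp
  -- the key identity in K
  have key : A F * A D * A RevD * RatFunc.X ^ dN
      = A N * A RevN * RatFunc.X ^ (m + dD) := by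
    have e2 : h * σ h = (A N * Polynomial.aeval ((RatFunc.X : RatFunc ℚ))⁻¹ N)
        / (A D * Polynomial.aeval ((RatFunc.X : RatFunc ℚ))⁻¹ D) := by
      rw [hσh, hhval, div_mul_div_comm]
    have e3 : Polynomial.aeval (RatFunc.X - (RatFunc.X)⁻¹ : RatFunc ℚ) f
        * (A D * Polynomial.aeval ((RatFunc.X : RatFunc ℚ))⁻¹ D)
        = A N * Polynomial.aeval ((RatFunc.X : RatFunc ℚ))⁻¹ N := by
      rw [hh, e2, div_mul_cancel₀]
      exact mul_ne_zero hADne hSD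
    calc A F * A D * A RevD * RatFunc.X ^ dN
        = (RatFunc.X ^ m * Polynomial.aeval (RatFunc.X - (RatFunc.X)⁻¹ : RatFunc ℚ) f)
            * A D * (RatFunc.X ^ dD * Polynomial.aeval ((RatFunc.X : RatFunc ℚ))⁻¹ D)
            * RatFunc.X ^ dN := by rw [hFalg, hRevDalg]
      _ = (Polynomial.aeval (RatFunc.X - (RatFunc.X)⁻¹ : RatFunc ℚ) f
            * (A D * Polynomial.aeval ((RatFunc.X : RatFunc ℚ))⁻¹ D))
            * (RatFunc.X ^ m * RatFunc.X ^ dD * RatFunc.X ^ dN) := by ring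
      _ = (A N * Polynomial.aeval ((RatFunc.X : RatFunc ℚ))⁻¹ N)
            * (RatFunc.X ^ m * RatFunc.X ^ dD * RatFunc.X ^ dN) := by rw [e3]
      _ = A N * (RatFunc.X ^ dN * Polynomial.aeval ((RatFunc.X : RatFunc ℚ))⁻¹ N)
            * RatFunc.X ^ (m + dD) := by rw [pow_add]; ring
      _ = A N * A RevN * RatFunc.X ^ (m + dD) := by rw [hRevNalg]
  -- transfer to a polynomial identity
  have P : F * D * RevD * Polynomial.X ^ dN = N * RevN * Polynomial.X ^ (m + dD) := by
    apply RatFunc.algebraMap_injective ℚ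
    simpa only [map_mul, map_pow, RatFunc.algebraMap_X] using key
  -- factor out powers of (X - 1)
  set s : Polynomial ℚ := Polynomial.X - Polynomial.C 1 with hs
  have hsne : s ≠ 0 := Polynomial.X_sub_C_ne_zero 1
  set a := Polynomial.rootMultiplicity 1 N with ha
  set b := Polynomial.rootMultiplicity 1 D with hb
  set N₁ := N /ₘ s ^ a with hN₁
  set D₁ := D /ₘ s ^ b with hD₁
  have hNfac : s ^ a * N₁ = N := Polynomial.pow_mul_divByMonic_rootMultiplicity_eq N 1
  have hDfac : s ^ b * D₁ = D := Polynomial.pow_mul_divByMonic_rootMultiplicity_eq D 1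
  have hN₁e : N₁.eval 1 ≠ 0 := Polynomial.eval_divByMonic_pow_rootMultiplicity_ne_zero 1 hNne
  have hD₁e : D₁.eval 1 ≠ 0 := Polynomial.eval_divByMonic_pow_rootMultiplicity_ne_zero 1 hDne
  have hN₁ne : N₁ ≠ 0 := fun e => hNne (by rw [← hNfac, e, mul_zero])
  have hD₁ne : D₁ ≠ 0 := fun e => hDne (by rw [← hDfac, e, mul_zero])
  have hdNeq : dN = a + N₁.natDegree := by
    rw [hdN, ← hNfac, Polynomial.natDegree_mul (pow_ne_zero a hsne) hN₁ne,
      Polynomial.natDegree_pow, hs, Polynomial.natDegree_X_sub_C, mul_one]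
  have hdDeq : dD = b + D₁.natDegree := by
    rw [hdD, ← hDfac, Polynomial.natDegree_mul (pow_ne_zero b hsne) hD₁ne,
      Polynomial.natDegree_pow, hs, Polynomial.natDegree_X_sub_C, mul_one]
  set RevN₁ : Polynomial ℚ := genRev 1 N₁.natDegree N₁ with hRevN₁
  set RevD₁ : Polynomial ℚ := genRev 1 D₁.natDegree D₁ with hRevD₁
  have hsinv : Polynomial.aeval ((RatFunc.X : RatFunc ℚ))⁻¹ s = (RatFunc.X)⁻¹ * (1 - RatFunc.X) := by
    rw [hs]
    simp only [map_sub, Polynomial.aeval_X, Polynomial.aeval_C]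
    have : algebraMap ℚ (RatFunc ℚ) 1 = 1 := map_one _
    rw [this]
    field_simp
  have hRevfac : ∀ (p p₁ : Polynomial ℚ) (k : ℕ), s ^ k * p₁ = p → p₁ ≠ 0 →
      p₁.eval 1 ≠ 0 →
      genRev 1 p.natDegree p = (1 - Polynomial.X) ^ k * genRev 1 p₁.natDegree p₁ := by
    intro p p₁ k hfac hp₁ hp₁e
    have hpne : p ≠ 0 := fun e => by
      rw [e] at hfac
      exact hp₁ (by
        rcases mul_eq_zero.mp hfac with h' | h'
        · exact absurd h' (pow_ne_zero k hsne)
        · exact h')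
    have hdeg : p.natDegree = k + p₁.natDegree := by
      rw [← hfac, Polynomial.natDegree_mul (pow_ne_zero k hsne) hp₁,
        Polynomial.natDegree_pow, hs, Polynomial.natDegree_X_sub_C, mul_one]
    apply RatFunc.algebraMap_injective ℚ
    rw [genRev_algebraMap _ _ _ (le_refl _), map_mul, map_pow,
      genRev_algebraMap _ _ _ (le_refl _)]
    simp only [map_one, one_mul]
    rw [← hfac, map_mul, map_pow, hsinv]
    have hdeg2 : (s ^ k * p₁).natDegree = k + p₁.natDegree := by rw [hfac]; exact hdeg
    rw [hdeg2, map_sub, map_one, RatFunc.algebraMap_X, pow_add, mul_pow, inv_pow]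
    field_simp
  have hRevNfac : RevN = (1 - Polynomial.X) ^ a * RevN₁ := by
    have := hRevfac N N₁ a hNfac hN₁ne hN₁e
    rw [hRevN, hRevN₁, ← hdN] at *
    exact this
  have hRevDfac : RevD = (1 - Polynomial.X) ^ b * RevD₁ := by
    have := hRevfac D D₁ b hDfac hD₁ne hD₁e
    rw [hRevD, hRevD₁, ← hdD] at *
    exact this
  -- rewrite P using the factorizations
  set u : Polynomial ℚ := s * (1 - Polynomial.X) with hu
  have hu1 : u.eval 1 = 0 := by simp [hu, hs]
  have hune : u ≠ 0 := by
    apply mul_ne_zero hsne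
    intro e
    have := congrArg (Polynomial.eval 0) e
    simp at this
  set G : Polynomial ℚ := F * D₁ * RevD₁ * Polynomial.X ^ dN with hG
  set H : Polynomial ℚ := N₁ * RevN₁ * Polynomial.X ^ (m + dD) with hH2
  have Q : u ^ b * G = u ^ a * H := by
    rw [hu, hG, hH2, mul_pow, mul_pow]
    rw [← hNfac, ← hDfac, hRevNfac, hRevDfac] at P
    linear_combination P
  have hRevN₁e : RevN₁.eval 1 = N₁.eval 1 := genRev_one_eval_one _ _ (le_refl _)
  have hRevD₁e : RevD₁.eval 1 = D₁.eval 1 := genRev_one_eval_one _ _ (le_refl _)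
  have hGe : G.eval 1 = f.coeff 0 * (D₁.eval 1 * D₁.eval 1) := by
    rw [hG]
    simp [hFeval, hRevD₁e]
    ring
  have hHe : H.eval 1 = N₁.eval 1 * N₁.eval 1 := by
    rw [hH2]
    simp [hRevN₁e]
  have hGne : G.eval 1 ≠ 0 := by
    rw [hGe]; exact mul_ne_zero h0 (mul_ne_zero hD₁e hD₁e)
  have hHne : H.eval 1 ≠ 0 := by
    rw [hHe]; exact mul_ne_zero hN₁e hN₁e
  have hmain : G.eval 1 = H.eval 1 := by
    rcases le_total a b with hab | hab
    · exact aux_cancel u G H hu1 hune hHne hab Q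
    · exact (aux_cancel u H G hu1 hune hGne hab Q.symm).symm
  rw [hGe, hHe] at hmain
  refine ⟨N₁.eval 1 / D₁.eval 1, ?_⟩
  field_simp
  linear_combination hmain
end
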